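/- Let t ∈ ℕ. A partition λ is typical for t if and only if there exists i ≥ 1 with t − |λ| = λ_i − i. Equivalently, λ is atypical for t (i.e. there exists a partition μ ≠ λ with μ ∼_t λ) if and only if t − |λ| ≠ λ_i − i for every i ≥ 1. (The final assertion of Theorem 5.6 (Comes–Ostrik) of the paper.) -/
import Mathlib


noncomputable section

/-- A partition, encoded as a weakly decreasing, eventually zero function `ℕ → ℕ`
(`lam i` is the `(i+1)`-st part `λ_{i+1}`). -/
def IsPartitionFn (lam : ℕ → ℕ) : Prop :=
  Antitone lam ∧ ∃ N : ℕ, ∀ i : ℕ, N ≤ i → lam i = 0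

/-- The size `|λ| = ∑ λ_i` of a partition. -/
def fnSize (lam : ℕ → ℕ) : ℕ := ∑ᶠ i, lam i

/-- The sequence `s_t(λ) = (t−|λ|, λ_1−1, λ_2−2, …) : ℕ → ℤ`. -/
def seqZ (t : ℤ) (lam : ℕ → ℕ) : ℕ → ℤ
  | 0 => t - (fnSize lam : ℤ)
  | i + 1 => (lam i : ℤ) - ((i : ℤ) + 1)

/-- `λ ∼_t μ` : the sequence `s_t(λ)` is a rearrangement of `s_t(μ)`. -/
def SimZ (t : ℤ) (lam mu : ℕ → ℕ) : Prop :=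
  ∀ v : ℤ, {i : ℕ | seqZ t lam i = v}.ncard = {i : ℕ | seqZ t mu i = v}.ncard

namespace Stmt16

open scoped Classical

def fseq (lam : ℕ → ℕ) (i : ℕ) : ℤ := (lam i : ℤ) - ((i : ℤ) + 1)

lemma seqZ_succ (t : ℤ) (lam : ℕ → ℕ) (i : ℕ) : seqZ t lam (i+1) = fseq lam i := rfl
lemma seqZ_zero (t : ℤ) (lam : ℕ → ℕ) : seqZ t lam 0 = t - fnSize lam := rfl

lemma fseq_strictAnti {lam : ℕ → ℕ} (h : Antitone lam) : StrictAnti (fseq lam) := by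
  apply strictAnti_nat_of_succ_lt
  intro n
  have h2 : (lam (n+1) : ℤ) ≤ lam n := by exact_mod_cast h (Nat.le_succ n)
  simp only [fseq]
  push_cast
  omega

lemma count_eq {lam : ℕ → ℕ} (h : Antitone lam) (t v : ℤ) :
    {i : ℕ | seqZ t lam i = v}.ncard =
      (if t - (fnSize lam : ℤ) = v then 1 else 0) +
      (if v ∈ Set.range (fseq lam) then 1 else 0) := by
  have hinj : Function.Injective (fseq lam) := (fseq_strictAnti h).injective
  by_cases h0 : t - (fnSize lam : ℤ) = v
  · by_cases h1 : v ∈ Set.range (fseq lam)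
    · obtain ⟨i₀, hi₀⟩ := h1
      have hset : {i : ℕ | seqZ t lam i = v} = {0, i₀ + 1} := by
        ext i
        cases i with
        | zero => simp [seqZ_zero, h0]
        | succ j =>
          simp only [Set.mem_setOf_eq, seqZ_succ, Set.mem_insert_iff, Set.mem_singleton_iff]
          constructor
          · intro hj
            right
            have : j = i₀ := hinj (hj.trans hi₀.symm)
            omega
          · rintro (hh | hh)
            · omega
            · have : j = i₀ := by omega
              rw [this, hi₀]
      rw [hset, Set.ncard_pair (by omega : (0:ℕ) ≠ i₀ + 1)]
      rw [if_pos h0, if_pos ⟨i₀, hi₀⟩]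
    · have hset : {i : ℕ | seqZ t lam i = v} = {0} := by
        ext i
        cases i with
        | zero => simp [seqZ_zero, h0]
        | succ j =>
          simp only [Set.mem_setOf_eq, seqZ_succ, Set.mem_singleton_iff]
          constructor
          · intro hj; exact absurd ⟨j, hj⟩ h1
          · intro hh; omega
      rw [hset, Set.ncard_singleton, if_pos h0, if_neg h1]
  · by_cases h1 : v ∈ Set.range (fseq lam)
    · obtain ⟨i₀, hi₀⟩ := h1
      have hset : {i : ℕ | seqZ t lam i = v} = {i₀ + 1} := by
        ext i
        cases i with
        | zero => simp [seqZ_zero, h0]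
        | succ j =>
          simp only [Set.mem_setOf_eq, seqZ_succ, Set.mem_singleton_iff]
          constructor
          · intro hj
            have : j = i₀ := hinj (hj.trans hi₀.symm)
            omega
          · intro hh
            have : j = i₀ := by omega
            rw [this, hi₀]
      rw [hset, Set.ncard_singleton, if_neg h0, if_pos ⟨i₀, hi₀⟩]
    · have hset : {i : ℕ | seqZ t lam i = v} = ∅ := by
        ext i
        cases i with
        | zero => simp [seqZ_zero, h0]
        | succ j =>
          simp only [Set.mem_setOf_eq, seqZ_succ, Set.mem_empty_iff_false, iff_false]
          intro hj; exact h1 ⟨j, hj⟩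
      rw [hset, Set.ncard_empty, if_neg h0, if_neg h1]

lemma strictAnti_range_eq {f g : ℕ → ℤ} (hf : StrictAnti f) (hg : StrictAnti g)
    (h : Set.range f = Set.range g) : f = g := by
  funext n
  induction n using Nat.strong_induction_on with
  | _ n ih =>
    rcases lt_trichotomy (f n) (g n) with hlt | heq | hgt
    · have h1 : f n ∈ Set.range g := h ▸ Set.mem_range_self n
      obtain ⟨m, hm⟩ := h1
      have hmn : n < m := by
        by_contra hc
        push_neg at hc
        have := hg.antitone hc
        omega
      have h2 : g n ∈ Set.range f := h.symm ▸ Set.mem_range_self n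
      obtain ⟨m', hm'⟩ := h2
      have hm'n : m' < n := by
        by_contra hc
        push_neg at hc
        have := hf.antitone hc
        omega
      have hih := ih m' hm'n
      have h3 : g m' = g n := by omega
      have := hg.injective h3
      omega
    · exact heq
    · have h1 : g n ∈ Set.range f := h.symm ▸ Set.mem_range_self n
      obtain ⟨m, hm⟩ := h1
      have hmn : n < m := by
        by_contra hc
        push_neg at hc
        have := hf.antitone hc
        omega
      have h2 : f n ∈ Set.range g := h ▸ Set.mem_range_self n
      obtain ⟨m', hm'⟩ := h2
      have hm'n : m' < n := by
        by_contra hc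
        push_neg at hc
        have := hg.antitone hc
        omega
      have hih := ih m' hm'n
      have h3 : f m' = f n := by omega
      have := hf.injective h3
      omega

lemma fnSize_eq_sum {lam : ℕ → ℕ} {N : ℕ} (h : ∀ i, N ≤ i → lam i = 0) :
    fnSize lam = ∑ i ∈ Finset.range N, lam i := by
  apply finsum_eq_sum_of_support_subset
  intro x hx
  simp only [Function.mem_support] at hx
  simp only [Finset.coe_range, Set.mem_Iio]
  by_contra hc
  push_neg at hc
  exact hx (h x hc)

end Stmt16

namespace Stmt16

open scoped Classical

lemma exists_mu {lam : ℕ → ℕ} (hanti : Antitone lam) {N : ℕ} (hN : ∀ i, N ≤ i → lam i = 0)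
    (t : ℕ) (hcnot : ((t:ℤ) - fnSize lam) ∉ Set.range (fseq lam)) :
    ∃ mu : ℕ → ℕ, IsPartitionFn mu ∧ SimZ (t:ℤ) lam mu ∧ mu ≠ lam := by
  set c : ℤ := (t:ℤ) - fnSize lam with hcdef
  have hex : ∃ i, fseq lam i < c := by
    refine ⟨max N (fnSize lam), ?_⟩
    have h0 : lam (max N (fnSize lam)) = 0 := hN _ (le_max_left _ _)
    have h1 : (fnSize lam : ℤ) ≤ (max N (fnSize lam) : ℤ) := by
      exact_mod_cast le_max_right N (fnSize lam)
    have ht : (0:ℤ) ≤ t := Int.natCast_nonneg t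
    simp only [fseq, h0]
    omega
  set k := Nat.find hex with hkdef
  have hk : fseq lam k < c := Nat.find_spec hex
  have hkmin : ∀ j, j < k → c < fseq lam j := by
    intro j hj
    have h1 : ¬ fseq lam j < c := Nat.find_min hex hj
    have h2 : c ≠ fseq lam j := fun h => hcnot ⟨j, h.symm⟩
    omega
  have hck : (0:ℤ) ≤ c + k + 1 := by
    have h0 : (0:ℤ) ≤ lam k := Int.natCast_nonneg _
    simp only [fseq] at hk
    omega
  set mu : ℕ → ℕ := fun i => if i = k then (c + k + 1).toNat else lam i with hmudef
  have hmuk : (mu k : ℤ) = c + k + 1 := by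
    simp only [hmudef, if_pos rfl]
    exact_mod_cast Int.toNat_of_nonneg hck
  have hmune : ∀ i, i ≠ k → mu i = lam i := by
    intro i hi; simp only [hmudef, if_neg hi]
  have hmuanti : Antitone mu := by
    apply antitone_nat_of_succ_le
    intro n
    have key : (mu (n+1) : ℤ) ≤ (mu n : ℤ) := by
      by_cases h1 : n + 1 = k
      · rw [h1, hmuk]
        have hlt := hkmin n (by omega)
        rw [hmune n (by omega)]
        simp only [fseq] at hlt
        omega
      · by_cases h2 : n = k
        · rw [hmune _ h1]
          have hlt : fseq lam (n+1) < fseq lam n := (fseq_strictAnti hanti) (by omega)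
          rw [h2] at hlt ⊢
          rw [hmuk]
          simp only [fseq] at hlt hk
          omega
        · rw [hmune _ h1, hmune _ h2]
          exact_mod_cast hanti (Nat.le_succ n)
    exact_mod_cast key
  have hmuzero : ∀ i, max N (k+1) ≤ i → mu i = 0 := by
    intro i hi
    rw [hmune i (by omega)]
    exact hN i (by omega)
  have hkmem : k ∈ Finset.range (max N (k+1)) := by
    simp only [Finset.mem_range]; omega
  have hsl : fnSize lam = ∑ i ∈ Finset.range (max N (k+1)), lam i :=
    fnSize_eq_sum (fun i hi => hN i (by omega))
  have hsm : fnSize mu = ∑ i ∈ Finset.range (max N (k+1)), mu i :=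
    fnSize_eq_sum hmuzero
  have hkey : fnSize mu + lam k = fnSize lam + mu k := by
    rw [hsl, hsm]
    rw [← Finset.add_sum_erase _ mu hkmem, ← Finset.add_sum_erase _ lam hkmem]
    have hcongr : ∑ i ∈ (Finset.range (max N (k+1))).erase k, mu i
         = ∑ i ∈ (Finset.range (max N (k+1))).erase k, lam i := by
      apply Finset.sum_congr rfl
      intro x hx
      exact hmune x (Finset.ne_of_mem_erase hx)
    omega
  have hcmu : (t:ℤ) - fnSize mu = fseq lam k := by
    have h1 : (fnSize mu : ℤ) + lam k = (fnSize lam : ℤ) + mu k := by exact_mod_cast hkey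
    rw [hmuk] at h1
    simp only [fseq]
    omega
  have hfmu : ∀ i, fseq mu i = if i = k then c else fseq lam i := by
    intro i
    by_cases hi : i = k
    · rw [if_pos hi, hi]
      simp only [fseq]
      rw [hmuk]
      ring
    · rw [if_neg hi]
      simp only [fseq, hmune i hi]
  have hinj : Function.Injective (fseq lam) := (fseq_strictAnti hanti).injective
  have hrange : ∀ v : ℤ, v ∈ Set.range (fseq mu) ↔
      (v = c ∨ (v ∈ Set.range (fseq lam) ∧ v ≠ fseq lam k)) := by
    intro v
    constructor
    · rintro ⟨i, hi⟩
      rw [hfmu i] at hi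
      by_cases h1 : i = k
      · rw [if_pos h1] at hi; exact Or.inl hi.symm
      · rw [if_neg h1] at hi
        refine Or.inr ⟨⟨i, hi⟩, fun hvk => h1 (hinj (hi.trans hvk))⟩
    · rintro (rfl | ⟨⟨i, hi⟩, hne⟩)
      · exact ⟨k, by rw [hfmu k, if_pos rfl]⟩
      · have hik : i ≠ k := fun h => hne (by rw [← hi, h])
        exact ⟨i, by rw [hfmu i, if_neg hik]; exact hi⟩
  have hfk : fseq lam k ∈ Set.range (fseq lam) := ⟨k, rfl⟩
  have hcne : c ≠ fseq lam k := fun h => hcnot (h ▸ hfk)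
  have hsim : SimZ (t:ℤ) lam mu := by
    intro v
    rw [count_eq hanti, count_eq hmuanti, hcmu, ← hcdef]
    by_cases hv1 : v = c
    · have e1 : c = v := hv1.symm
      have e2 : v ∉ Set.range (fseq lam) := hv1 ▸ hcnot
      have e3 : ¬ (fseq lam k = v) := fun h => hcne (h.trans hv1).symm
      have e4 : v ∈ Set.range (fseq mu) := (hrange v).mpr (Or.inl hv1)
      rw [if_pos e1, if_neg e2, if_neg e3, if_pos e4]
    · by_cases hv2 : v = fseq lam k
      · have e1 : ¬ c = v := fun h => hv1 h.symm
        have e2 : v ∈ Set.range (fseq lam) := ⟨k, hv2.symm⟩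
        have e3 : fseq lam k = v := hv2.symm
        have e4 : v ∉ Set.range (fseq mu) := fun h => by
          rcases (hrange v).mp h with h' | ⟨_, h'⟩
          exacts [hv1 h', h' hv2]
        rw [if_neg e1, if_pos e2, if_pos e3, if_neg e4]
      · rw [if_neg (fun h : c = v => hv1 h.symm), if_neg (fun h : fseq lam k = v => hv2 h.symm)]
        by_cases hv3 : v ∈ Set.range (fseq lam)
        · rw [if_pos hv3, if_pos ((hrange v).mpr (Or.inr ⟨hv3, hv2⟩))]
        · rw [if_neg hv3, if_neg (fun h => by
            rcases (hrange v).mp h with h' | ⟨h', _⟩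
            exacts [hv1 h', hv3 h'])]
  refine ⟨mu, ⟨hmuanti, max N (k+1), hmuzero⟩, hsim, ?_⟩
  intro heq
  have h1 : (mu k : ℤ) = lam k := by rw [heq]
  rw [hmuk] at h1
  have h2 : c = fseq lam k := by simp only [fseq]; omega
  exact hcnot ⟨k, h2.symm⟩

lemma typical_of_mem {lam : ℕ → ℕ} (hanti : Antitone lam) (t : ℤ)
    (hc : (t - (fnSize lam : ℤ)) ∈ Set.range (fseq lam))
    (mu : ℕ → ℕ) (hmu : IsPartitionFn mu) (hsim : SimZ t lam mu) : mu = lam := by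
  obtain ⟨hmuanti, -⟩ := hmu
  have hcount : ∀ v, (if t - (fnSize lam:ℤ) = v then 1 else 0)
        + (if v ∈ Set.range (fseq lam) then 1 else 0)
      = (if t - (fnSize mu:ℤ) = v then 1 else 0)
        + (if v ∈ Set.range (fseq mu) then 1 else 0) := by
    intro v
    rw [← count_eq hanti, ← count_eq hmuanti]
    exact hsim v
  set c := t - (fnSize lam : ℤ) with hcdef
  have h2 : t - (fnSize mu:ℤ) = c := by
    have h := hcount c
    rw [if_pos rfl, if_pos hc] at h
    by_contra ha
    rw [if_neg ha] at h
    split_ifs at h <;> omega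
  have hr : Set.range (fseq lam) = Set.range (fseq mu) := by
    ext v
    have h := hcount v
    rw [h2] at h
    constructor <;> intro hv' <;> by_contra hv''
    · rw [if_pos hv', if_neg hv''] at h; split_ifs at h <;> omega
    · rw [if_neg hv'', if_pos hv'] at h; split_ifs at h <;> omega
  have hfg := strictAnti_range_eq (fseq_strictAnti hanti) (fseq_strictAnti hmuanti) hr
  funext n
  have hn := congrFun hfg n
  simp only [fseq] at hn
  omega

end Stmt16

/-- For `t ∈ ℕ`: a partition `λ` is typical for `t` (i.e. `λ ∼_t μ` implies `μ = λ`) if and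
only if `t − |λ| = λ_i − i` for some `i ≥ 1`. -/
theorem stmt16 (t : ℕ) (lam : ℕ → ℕ) (hl : IsPartitionFn lam) :
    (∀ mu : ℕ → ℕ, IsPartitionFn mu → SimZ (t : ℤ) lam mu → mu = lam) ↔
      ∃ i : ℕ, 1 ≤ i ∧ seqZ (t : ℤ) lam 0 = seqZ (t : ℤ) lam i := by
  obtain ⟨hanti, N, hN⟩ := hl
  constructor
  · intro htyp
    by_contra hno
    push_neg at hno
    have hcnot : ((t:ℤ) - fnSize lam) ∉ Set.range (Stmt16.fseq lam) := by
      rintro ⟨i, hi⟩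
      refine hno (i+1) (by omega) ?_
      rw [Stmt16.seqZ_zero, Stmt16.seqZ_succ]
      exact hi.symm
    obtain ⟨mu, hmup, hsim, hne⟩ := Stmt16.exists_mu hanti hN t hcnot
    exact hne (htyp mu hmup hsim)
  · rintro ⟨i, hi1, hi⟩ mu hmu hsim
    obtain ⟨j, rfl⟩ : ∃ j, i = j + 1 := ⟨i - 1, by omega⟩
    have hc : ((t:ℤ) - fnSize lam) ∈ Set.range (Stmt16.fseq lam) :=
      ⟨j, by rw [← Stmt16.seqZ_succ (t:ℤ) lam j, ← hi, Stmt16.seqZ_zero]⟩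
    exact Stmt16.typical_of_mem hanti (t:ℤ) hc mu hmu hsim
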